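/- Suppose ℏ ≥ 0 and ℏ + a − b ≤ u ≤ ℏ + a + b. Then v = ℏ minimizes φ, i.e., φ(ℏ) ≤ φ(v) for all v ∈ ℝ, where φ(v) = a·|v| + b·|v − ℏ| + (1/2)·(v − u)². -/

import Mathlib

/-!
`u - ℏ` is a subgradient of `g v = a |v| + b |v - ℏ|` at `ℏ`: the first term contributes `a`
(as `ℏ ≥ 0`) and the second any slope in `[-b, b]`, and `u - ℏ - a ∈ [-b, b]` is exactly the
hypothesis on `u`. Expanding the square, a point at which `u - x` is a subgradient of `g`
minimizes `g + ½ ‖· - u‖²`.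
-/

open scoped InnerProductSpace

section Subgradient

variable {E : Type*} [NormedAddCommGroup E] [InnerProductSpace ℝ E]

def HasSubgradientAt (g : E → ℝ) (s x : E) : Prop :=
  ∀ v, g x + ⟪s, v - x⟫_ℝ ≤ g v

theorem HasSubgradientAt.add {g h : E → ℝ} {s t x : E} (hg : HasSubgradientAt g s x)
    (hh : HasSubgradientAt h t x) : HasSubgradientAt (fun v ↦ g v + h v) (s + t) x := by
  intro v
  have := add_le_add (hg v) (hh v)
  rw [inner_add_left]
  linarith

theorem HasSubgradientAt.le_add_half_norm_sub_sq {g : E → ℝ} {u x : E}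
    (hg : HasSubgradientAt g (u - x) x) (v : E) :
    g x + 1 / 2 * ‖x - u‖ ^ 2 ≤ g v + 1 / 2 * ‖v - u‖ ^ 2 := by
  have hexpand : ‖v - u‖ ^ 2 = ‖v - x‖ ^ 2 + 2 * ⟪v - x, x - u⟫_ℝ + ‖x - u‖ ^ 2 := by
    rw [← norm_add_sq_real, sub_add_sub_cancel]
  have hinner : ⟪v - x, x - u⟫_ℝ = -⟪u - x, v - x⟫_ℝ := by
    rw [real_inner_comm, ← inner_neg_left, neg_sub]
  have := hg v
  linarith [sq_nonneg ‖v - x‖]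

end Subgradient

theorem hasSubgradientAt_const_mul_abs_of_nonneg {a x : ℝ} (ha : 0 ≤ a) (hx : 0 ≤ x) :
    HasSubgradientAt (fun v ↦ a * |v|) a x := by
  intro v
  simp only [Real.inner_apply, abs_of_nonneg hx]
  linarith [mul_le_mul_of_nonneg_left (le_abs_self v) ha]

theorem hasSubgradientAt_const_mul_abs_sub_self {b t x : ℝ} (ht : |t| ≤ b) :
    HasSubgradientAt (fun v ↦ b * |v - x|) t x := by
  intro v
  simp only [Real.inner_apply]
  calc b * |x - x| + t * (v - x) = t * (v - x) := by simp
    _ ≤ |t| * |v - x| := (le_abs_self _).trans (abs_mul _ _).le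
    _ ≤ b * |v - x| := mul_le_mul_of_nonneg_right ht (abs_nonneg _)

theorem prox_reweighted_l1_l1_hbar_of_hbar_nonneg_general
    (a b hbar u : ℝ) (ha : 0 ≤ a) (hhbar : 0 ≤ hbar)
    (h1 : hbar + a - b ≤ u) (h2 : u ≤ hbar + a + b) :
    ∀ v : ℝ,
      a * |hbar| + b * |hbar - hbar| + (1 / 2) * (hbar - u) ^ 2 ≤
        a * |v| + b * |v - hbar| + (1 / 2) * (v - u) ^ 2 := by
  intro v
  have hslope : |u - hbar - a| ≤ b := abs_le.2 ⟨by linarith, by linarith⟩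
  have hsub : HasSubgradientAt (fun v ↦ a * |v| + b * |v - hbar|) (u - hbar) hbar := by
    convert (hasSubgradientAt_const_mul_abs_of_nonneg ha hhbar).add
      (hasSubgradientAt_const_mul_abs_sub_self hslope) using 1
    ring
  simpa only [Real.norm_eq_abs, sq_abs] using hsub.le_add_half_norm_sub_sq v

/-- Proposition 1 (case `hbar ≥ 0`), intermediate claim: if
`hbar + a - b ≤ u ≤ hbar + a + b`, then `v = hbar` minimizes
`φ(v) = a·|v| + b·|v − hbar| + (1/2)·(v − u)²`. -/
theorem prox_reweighted_l1_l1_hbar_of_hbar_nonneg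
    (a b hbar u : ℝ) (ha : 0 ≤ a) (hb : 0 ≤ b) (hhbar : 0 ≤ hbar)
    (h1 : hbar + a - b ≤ u) (h2 : u ≤ hbar + a + b) :
    ∀ v : ℝ,
      a * |hbar| + b * |hbar - hbar| + (1 / 2) * (hbar - u) ^ 2 ≤
        a * |v| + b * |v - hbar| + (1 / 2) * (v - u) ^ 2 :=
  prox_reweighted_l1_l1_hbar_of_hbar_nonneg_general a b hbar u ha hhbar h1 h2
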